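/- If the clustering-difference graph CDG(C, C') decomposes into pairwise vertex-disjoint directed cycles and t ≥ 1 pairwise vertex-disjoint directed paths (all cycles and paths mutually vertex-disjoint), then d(C, C') ≤ max{2, t}. -/

import Mathlib

variable {X : Type*} [Fintype X] [DecidableEq X] {k : ℕ}

/-- The clustering-difference graph `CDG(c, c'')` (one edge `c x → c'' x` for each
item `x` with `c x ≠ c'' x`) is a single directed cycle: there are `m + 1` distinct
cluster indices `v 0, ..., v m` and the items moved are exactly one per edge
`v i → v (i+1)` (indices mod `m + 1`). -/
def IsCyclicalMove (c c'' : X → Fin k) : Prop :=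
  ∃ (m : ℕ) (v : Fin (m + 1) ↪ Fin k)
    (e : {x : X // c x ≠ c'' x} ≃ Fin (m + 1)),
    ∀ x : {x : X // c x ≠ c'' x}, c x.1 = v (e x) ∧ c'' x.1 = v (e x + 1)

/-- The clustering-difference graph `CDG(c, c'')` is a single directed path: there
are `m + 2` distinct cluster indices `v 0, ..., v (m+1)` and the items moved are
exactly one per edge `v i → v (i+1)`, `0 ≤ i ≤ m`. -/
def IsSequentialMove (c c'' : X → Fin k) : Prop :=
  ∃ (m : ℕ) (v : Fin (m + 2) ↪ Fin k)
    (e : {x : X // c x ≠ c'' x} ≃ Fin (m + 1)),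
    ∀ x : {x : X // c x ≠ c'' x}, c x.1 = v (e x).castSucc ∧ c'' x.1 = v (e x).succ

/-- An elementary move: a cyclical or a sequential move. -/
def IsMove (c c'' : X → Fin k) : Prop :=
  IsCyclicalMove c c'' ∨ IsSequentialMove c c''

/-- The transformation distance: the minimum number of elementary moves needed to
transform `c` into `c'`. -/
noncomputable def transDist (c c' : X → Fin k) : ℕ :=
  sInf {n | ∃ f : ℕ → X → Fin k, f 0 = c ∧ f n = c' ∧ ∀ i < n, IsMove (f i) (f (i + 1))}

/-- The size of cluster `i` in the clustering `c`. -/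
def clusterSize (c : X → Fin k) (i : Fin k) : ℕ :=
  (Finset.univ.filter fun x => c x = i).card

/-- The outdegree of vertex `i` in `CDG(c, c')`. -/
def cdgOutdeg (c c' : X → Fin k) (i : Fin k) : ℕ :=
  (Finset.univ.filter fun x => c x = i ∧ c' x ≠ i).card

/-- The indegree of vertex `i` in `CDG(c, c')`. -/
def cdgIndeg (c c' : X → Fin k) (i : Fin k) : ℕ :=
  (Finset.univ.filter fun x => c' x = i ∧ c x ≠ i).card

/-- The shared degree of vertex `i` in `CDG(c, c')`. -/
def sharedDeg (c c' : X → Fin k) (i : Fin k) : ℕ :=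
  min (cdgIndeg c c' i) (cdgOutdeg c c' i)

/-- The edges of `CDG(c, c')` labeled by the items in `B` form a single directed
cycle through `m + 1` distinct cluster indices. -/
def IsCycleOn (c c' : X → Fin k) (B : Finset X) : Prop :=
  ∃ (m : ℕ) (v : Fin (m + 1) ↪ Fin k) (g : Fin (m + 1) → X),
    Function.Injective g ∧ Finset.univ.image g = B ∧
    ∀ i, c (g i) = v i ∧ c' (g i) = v (i + 1)

/-- The edges of `CDG(c, c')` labeled by the items in `B` form a single directed
path through `m + 2` distinct cluster indices. -/
def IsPathOn (c c' : X → Fin k) (B : Finset X) : Prop :=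
  ∃ (m : ℕ) (v : Fin (m + 2) ↪ Fin k) (g : Fin (m + 1) → X),
    Function.Injective g ∧ Finset.univ.image g = B ∧
    ∀ i : Fin (m + 1), c (g i) = v i.castSucc ∧ c' (g i) = v i.succ

/-!
All cycles and one path `P₁ = w → ⋯ → e` are handled in two moves. A cycle
`u₀ → u₁ → ⋯ → uₘ → u₀` is prepended to the first move, which so far runs from `a` to `e`,
with its closing edge redirected to `uₘ → a`; the first move then starts at `u₀`. The
redirected items are put right by the second move, the path `w → ⋯ → a → u₀`, which again ends
where the first move starts. For `t ≥ 2` a second path `a₀ → a₁ → ⋯` is absorbed the same way: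
its first edge is redirected to `a₀ → a` in the first move, and the second move continues
`a → a₁ → ⋯`. Each of the other `t - 2` paths is one further move.
-/

open Finset

section MovePath

variable {α : Type*} {k : ℕ}

/-- `p` lists, in order, the edges of a directed path `a = v₀ → v₁ → ⋯ → vₙ = b` through
distinct vertices of `CDG(c, d)`: the vertex list is `a :: p.map d = p.map c ++ [b]`. -/
def IsMovePath (c d : α → Fin k) (p : List α) (a b : Fin k) : Prop :=
  (a :: p.map d).Nodup ∧ a :: p.map d = p.map c ++ [b]

namespace IsMovePath

variable {c d c₂ d₂ : α → Fin k} {p q : List α} {a b e : Fin k}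

theorem nil (c d : α → Fin k) (a : Fin k) : IsMovePath c d [] a a := by
  simp [IsMovePath]

theorem singleton {x : α} (hc : c x = a) (hd : d x = b) (hab : a ≠ b) :
    IsMovePath c d [x] a b := by
  simp [IsMovePath, hc, hd, hab]

theorem congr (hc : ∀ x ∈ p, c x = c₂ x) (hd : ∀ x ∈ p, d x = d₂ x)
    (h : IsMovePath c d p a b) : IsMovePath c₂ d₂ p a b := by
  rwa [IsMovePath, ← List.map_congr_left hc, ← List.map_congr_left hd]

theorem nodup_map_left (h : IsMovePath c d p a b) : (p.map c ++ [b]).Nodup :=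
  h.2 ▸ h.1

theorem nodup (h : IsMovePath c d p a b) : p.Nodup :=
  (List.nodup_append.1 h.nodup_map_left).1.of_map c

theorem notMem_map_left (h : IsMovePath c d p a b) : b ∉ p.map c := by
  have := h.nodup_map_left
  simp_all [List.nodup_append]

theorem mem_iff {v : Fin k} (h : IsMovePath c d p a b) :
    v ∈ a :: p.map d ↔ v ∈ p.map c ∨ v = b := by
  rw [h.2]; simp

theorem start_mem_map_left (h : IsMovePath c d p a b) (hp : p ≠ []) : a ∈ p.map c := by
  obtain ⟨x, p, rfl⟩ := List.exists_cons_of_ne_nil hp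
  have := h.2
  simp_all

theorem of_cons {x : α} (h : IsMovePath c d (x :: p) a b) : a = c x ∧ IsMovePath c d p (d x) b := by
  obtain ⟨hnd, heq⟩ := h
  simp only [List.map_cons, List.cons_append, List.cons.injEq] at heq
  exact ⟨heq.1, (List.nodup_cons.1 hnd).2, heq.2⟩

theorem append (hp : IsMovePath c d p a b) (hq : IsMovePath c d q b e)
    (hpq : (p.map c).Disjoint (b :: q.map d)) : IsMovePath c d (p ++ q) a e := by
  have hpq' : a :: (p ++ q).map d = p.map c ++ b :: q.map d := by
    rw [List.map_append, ← List.cons_append, hp.2]; simp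
  refine ⟨?_, ?_⟩
  · rw [hpq', List.nodup_append]
    exact ⟨(List.nodup_append.1 hp.nodup_map_left).1, hq.1, fun u hu v hv huv => hpq hu (huv ▸ hv)⟩
  · rw [hpq', hq.2]; simp

theorem forall_mem_vertices {P : Fin k → Prop} (h : IsMovePath c d p a b) (hc : ∀ x ∈ p, P (c x))
    (hb : P b) : ∀ v ∈ a :: p.map d, P v := fun v hv => by
  rcases h.mem_iff.1 hv with hv | rfl
  · obtain ⟨x, hx, rfl⟩ := List.mem_map.1 hv
    exact hc x hx
  · exact hb

theorem join {z : α} {b' : Fin k} (hp : IsMovePath c d p a b) (hzc : c z = b) (hzd : d z = b')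
    (hq : IsMovePath c d q b' e) (hpq : (a :: p.map d).Disjoint (b' :: q.map d)) :
    IsMovePath c d (p ++ z :: q) a e := by
  have hb : b ∉ b' :: q.map d := hpq (hp.mem_iff.2 (Or.inr rfl))
  have hzq : IsMovePath c d (z :: q) b e :=
    (singleton hzc hzd fun hbb => hb (hbb ▸ List.mem_cons_self ..)).append hq
      (by simpa [hzc] using hb)
  refine hp.append hzq fun v hv hv' => ?_
  rcases List.mem_cons.1 hv' with rfl | hv'
  · exact hp.notMem_map_left hv
  · exact hpq (hp.mem_iff.2 (Or.inl hv)) (by simpa [hzd] using hv')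

theorem getElem_vertices {i : ℕ} (h : IsMovePath c d p a b) (hi : i < p.length) :
    (p.map c ++ [b])[i]'(by simp; omega) = c p[i] ∧
      (p.map c ++ [b])[i + 1]'(by simp; omega) = d p[i] := by
  constructor
  · rw [List.getElem_append_left (by simpa using hi), List.getElem_map]
  · simp only [← h.2, List.getElem_cons_succ, List.getElem_map]

theorem ne_of_mem {x : α} (h : IsMovePath c d p a b) (hx : x ∈ p) : c x ≠ d x := by
  obtain ⟨i, hi, rfl⟩ := List.getElem_of_mem hx
  obtain ⟨h₀, h₁⟩ := h.getElem_vertices hi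
  rw [← h₀, ← h₁, Ne, h.nodup_map_left.getElem_inj_iff]
  omega

theorem isSequentialMove (h : IsMovePath c d p a b) (hp : p ≠ [])
    (hfix : ∀ x ∉ p, d x = c x) : IsSequentialMove c d := by
  classical
  obtain ⟨m, hm⟩ : ∃ m, p.length = m + 1 := Nat.exists_eq_succ_of_ne_zero (by simpa using hp)
  have hmoved : ∀ x, c x ≠ d x ↔ x ∈ p := fun x =>
    ⟨fun hx => by_contra fun hxp => hx (hfix x hxp).symm, h.ne_of_mem⟩
  have hL : (p.map c ++ [b]).length = m + 2 := by simp [hm]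
  let e : {x // c x ≠ d x} ≃ Fin (m + 1) :=
    (Equiv.subtypeEquivRight hmoved).trans ((h.nodup.getEquiv p).symm.trans (finCongr hm))
  have he : ∀ x, p[(e x : ℕ)]'(by omega) = x.1 := fun x => by
    simp [e, List.getElem_idxOf]
  refine ⟨m, ⟨(p.map c ++ [b]).get ∘ Fin.cast hL.symm,
    (List.nodup_iff_injective_get.1 h.nodup_map_left).comp (Fin.cast_injective _)⟩, e, fun x => ?_⟩
  obtain ⟨h₀, h₁⟩ := h.getElem_vertices (i := e x) (by omega)
  rw [he] at h₀ h₁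
  exact ⟨h₀.symm, h₁.symm⟩

end IsMovePath
end MovePath

section WithinMoves
variable {α : Type*} {k : ℕ} {c c' c'' : α → Fin k} {n n' : ℕ}

def WithinMoves (n : ℕ) (c c' : α → Fin k) : Prop :=
  ∃ m ≤ n, ∃ f : ℕ → α → Fin k, f 0 = c ∧ f m = c' ∧ ∀ i < m, IsMove (f i) (f (i + 1))

namespace WithinMoves

theorem refl (n : ℕ) (c : α → Fin k) : WithinMoves n c c :=
  ⟨0, n.zero_le, fun _ => c, rfl, rfl, by simp⟩

theorem of_isMove (h : IsMove c c') : WithinMoves 1 c c' :=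
  ⟨1, le_rfl, fun i => if i = 0 then c else c', rfl, rfl, by simpa using h⟩

theorem trans (h : WithinMoves n c c') (h' : WithinMoves n' c' c'') :
    WithinMoves (n + n') c c'' := by
  obtain ⟨m, hm, f, hf0, hfm, hf⟩ := h
  obtain ⟨m', hm', g, hg0, hgm, hg⟩ := h'
  have hfg : ∀ i, m ≤ i → (if i ≤ m then f i else g (i - m)) = g (i - m) := fun i hi => by
    split_ifs with h
    · rw [show i = m by omega, hfm, Nat.sub_self, hg0]
    · rfl
  refine ⟨m + m', by omega, fun i => if i ≤ m then f i else g (i - m), by simp [hf0], ?_,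
    fun i hi => ?_⟩
  · simp only
    rw [hfg _ (by omega), Nat.add_sub_cancel_left, hgm]
  · simp only
    rcases lt_or_ge i m with him | him
    · rw [if_pos him.le, if_pos (Nat.succ_le_of_lt him)]
      exact hf i him
    · rw [hfg _ him, hfg _ (by omega), show i + 1 - m = i - m + 1 by omega]
      exact hg _ (by omega)

theorem transDist_le (h : WithinMoves n c c') : transDist c c' ≤ n := by
  obtain ⟨m, hm, hseq⟩ := h
  exact (Nat.sInf_le hseq).trans hm

end WithinMoves

theorem IsMovePath.withinMoves_one {d : α → Fin k} {p : List α} {a b : Fin k}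
    (h : IsMovePath c d p a b) (hfix : ∀ x ∉ p, d x = c x) : WithinMoves 1 c d := by
  rcases eq_or_ne p [] with rfl | hp
  · rw [show d = c from funext fun x => hfix x List.not_mem_nil]
    exact WithinMoves.refl 1 c
  · exact WithinMoves.of_isMove (Or.inr (h.isSequentialMove hp hfix))

end WithinMoves

theorem List.cons_ofFn_succ_eq_ofFn_castSucc_append {β : Type*} {n : ℕ} (f : Fin (n + 1) → β) :
    f 0 :: List.ofFn (fun i => f i.succ) =
      List.ofFn (fun i => f i.castSucc) ++ [f (Fin.last n)] := by
  rw [← List.ofFn_succ, List.ofFn_succ', List.concat_eq_append]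

section Blocks
variable {α : Type*} [DecidableEq α] {k : ℕ} {c c' : α → Fin k} {B : Finset α}

theorem IsPathOn.exists_isMovePath (h : IsPathOn c c' B) :
    ∃ p a b, IsMovePath c c' p a b ∧ p ≠ [] ∧ p.toFinset = B := by
  obtain ⟨m, v, g, -, rfl, hvg⟩ := h
  have hd : List.map c' (List.ofFn g) = List.ofFn (fun i => v i.succ) := by
    simp only [List.map_ofFn]; exact congrArg _ (funext fun i => (hvg i).2)
  have hc : List.map c (List.ofFn g) = List.ofFn (fun i => v i.castSucc) := by
    simp only [List.map_ofFn]; exact congrArg _ (funext fun i => (hvg i).1)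
  refine ⟨List.ofFn g, v 0, v (Fin.last _), ⟨?_, ?_⟩, by simp, ?_⟩
  · rw [hd, ← List.ofFn_succ]
    exact List.nodup_ofFn.2 v.injective
  · rw [hd, hc, List.cons_ofFn_succ_eq_ofFn_castSucc_append]
  · ext; simp only [List.mem_toFinset, List.mem_ofFn, Finset.mem_image,
      Finset.mem_univ, true_and]

theorem IsCycleOn.exists_isMovePath (h : IsCycleOn c c' B) :
    ∃ ys z, IsMovePath c c' ys (c' z) (c z) ∧ (ys ++ [z]).Nodup ∧ (ys ++ [z]).toFinset = B := by
  obtain ⟨m, v, g, hg, rfl, hvg⟩ := h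
  set ys := List.ofFn (fun i : Fin m => g i.castSucc)
  have hofFn : ys ++ [g (Fin.last m)] = List.ofFn g := by
    rw [List.ofFn_succ' g, List.concat_eq_append]
  have hd : ys.map c' = List.ofFn (fun i => v i.succ) := by
    simp only [ys, List.map_ofFn]
    exact congrArg _ (funext fun i => by simp [(hvg _).2, Fin.coeSucc_eq_succ])
  have hc : ys.map c = List.ofFn (fun i => v i.castSucc) := by
    simp only [ys, List.map_ofFn]
    exact congrArg _ (funext fun i => by simp [(hvg _).1])
  have hz : c' (g (Fin.last m)) = v 0 := by rw [(hvg _).2, Fin.last_add_one]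
  refine ⟨ys, g (Fin.last m), ⟨?_, ?_⟩, ?_, ?_⟩
  · rw [hd, hz, ← List.ofFn_succ]
    exact List.nodup_ofFn.2 v.injective
  · rw [hd, hc, hz, (hvg _).1, List.cons_ofFn_succ_eq_ofFn_castSucc_append]
  · rw [hofFn]; exact List.nodup_ofFn.2 hg
  · rw [hofFn]
    ext; simp only [List.mem_toFinset, List.mem_ofFn, Finset.mem_image,
      Finset.mem_univ, true_and]

end Blocks

section Scheme
variable {α : Type*} {k : ℕ} {c c' c₁ : α → Fin k} {S T : Finset α}

def vertexSet (c c' : α → Fin k) (S : Finset α) : Finset (Fin k) :=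
  S.image c ∪ S.image c'

theorem mem_vertexSet_left {x : α} (hx : x ∈ S) : c x ∈ vertexSet c c' S :=
  mem_union_left _ (mem_image_of_mem c hx)

theorem mem_vertexSet_right {x : α} (hx : x ∈ S) : c' x ∈ vertexSet c c' S :=
  mem_union_right _ (mem_image_of_mem c' hx)

theorem vertexSet_mono (h : S ⊆ T) : vertexSet c c' S ⊆ vertexSet c c' T :=
  union_subset_union (image_subset_image h) (image_subset_image h)

theorem vertexSet_biUnion [DecidableEq α] (𝒜 : Finset (Finset α)) :
    vertexSet c c' (𝒜.biUnion id) = 𝒜.biUnion (vertexSet c c') := by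
  ext v; simp only [vertexSet, mem_union, mem_image, mem_biUnion, id]; aesop

theorem notMem_of_disjoint_vertexSet {x : α} (h : Disjoint (vertexSet c c' S) (vertexSet c c' T))
    (hx : x ∈ S) : x ∉ T := fun hxT =>
  disjoint_left.1 h (mem_vertexSet_left hx) (mem_vertexSet_left hxT)

/-- Two moves `c → c₁ → c''`, where `c''` is `c'` on `S` and `c` elsewhere: the first along `p₁`
from `a` to `e`, the second along `p₂` from `w` to `f`. -/
structure TwoMoveScheme (c c' c₁ : α → Fin k) (S : Finset α) (p₁ p₂ : List α)
    (a e w f : Fin k) : Prop where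
  path₁ : IsMovePath c c₁ p₁ a e
  fixed₁ : ∀ x ∉ p₁, c₁ x = c x
  path₂ : IsMovePath c₁ c' p₂ w f
  settled : ∀ x ∈ p₁, x ∉ p₂ → c₁ x = c' x
  mem_iff : ∀ x, x ∈ S ↔ x ∈ p₁ ∨ x ∈ p₂
  end_mem : e ∈ vertexSet c c' S
  start_mem : w ∈ vertexSet c c' S

namespace TwoMoveScheme

variable {p₁ p₂ : List α} {a e w f : Fin k}

theorem of_isMovePath [DecidableEq α] {q : List α} (hq : IsMovePath c c' q w e) (hq₀ : q ≠ []) :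
    TwoMoveScheme c c' (fun x => if x ∈ q then c' x else c x) q.toFinset q [] w e w w := by
  have hw : w ∈ vertexSet c c' q.toFinset := by
    obtain ⟨x, hx, rfl⟩ := List.mem_map.1 (hq.start_mem_map_left hq₀)
    exact mem_vertexSet_left (List.mem_toFinset.2 hx)
  refine ⟨hq.congr (fun _ _ => rfl) fun x hx => by simp [hx], fun x hx => by simp [hx],
    IsMovePath.nil _ _ w, fun x hx _ => by simp [hx], fun x => by simp, ?_, hw⟩
  rcases List.mem_cons.1 (hq.mem_iff.2 (Or.inr rfl)) with rfl | he
  · exact hw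
  · obtain ⟨x, hx, rfl⟩ := List.mem_map.1 he
    exact mem_vertexSet_right (List.mem_toFinset.2 hx)

/-- Merge a new block `ys ++ z :: us`, vertex-disjoint from `S`, into a scheme whose second move
ends where its first begins: the first move gains the prefix `ys ++ [z]`, with `z` redirected to
`a`, and the second move gains `z` (from `a` to `c' z`) followed by `us`. -/
theorem merge [DecidableEq α] (h : TwoMoveScheme c c' c₁ S p₁ p₂ a e w a)
    (hST : Disjoint (vertexSet c c' S) (vertexSet c c' T))
    {ys us : List α} {z : α} {s b : Fin k}
    (hys : IsMovePath c c' ys s (c z)) (hus : IsMovePath c c' us (c' z) b)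
    (hnd : (ys ++ z :: us).Nodup) (hT : (ys ++ z :: us).toFinset = T) :
    TwoMoveScheme c c' (fun x => if x ∈ ys then c' x else if x = z then a else c₁ x) (S ∪ T)
      (ys ++ z :: p₁) (p₂ ++ z :: us) s e w b := by
  set c₁' := fun x => if x ∈ ys then c' x else if x = z then a else c₁ x
  have hTmem : ∀ x, x ∈ T ↔ x ∈ ys ∨ x = z ∨ x ∈ us := fun x => by
    simp only [← hT, List.toFinset_append, List.toFinset_cons, union_insert, mem_insert,
      mem_union, List.mem_toFinset]
    tauto
  have hnd' : z ∉ ys ∧ z ∉ us ∧ ∀ x ∈ us, x ∉ ys := by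
    simp only [List.nodup_append, List.nodup_cons, List.mem_cons] at hnd
    exact ⟨fun hz => hnd.2.2 z hz z (Or.inl rfl) rfl, hnd.2.1.1,
      fun x hx hxy => hnd.2.2 x hxy x (Or.inr hx) rfl⟩
  have hzT : z ∈ T := (hTmem z).2 (Or.inr (Or.inl rfl))
  have hold : ∀ x ∈ S, c₁' x = c₁ x := fun x hx => by
    have := notMem_of_disjoint_vertexSet hST hx
    simp only [hTmem, not_or] at this
    simp [c₁', this.1, this.2.1]
  have hz : c₁' z = a := by simp [c₁', hnd'.1]
  have hys' : IsMovePath c c₁' ys s (c z) :=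
    hys.congr (fun _ _ => rfl) fun x hx => by simp [c₁', hx]
  have hus' : IsMovePath c₁' c' us (c' z) b := hus.congr (fun x hx => ?_) fun _ _ => rfl
  swap
  · have hxp₁ : x ∉ p₁ := fun hx₁ => notMem_of_disjoint_vertexSet hST
      ((h.mem_iff x).2 (Or.inl hx₁)) ((hTmem x).2 (Or.inr (Or.inr hx)))
    simp [c₁', hnd'.2.2 x hx, show x ≠ z from fun hxz => hnd'.2.1 (hxz ▸ hx), h.fixed₁ x hxp₁]
  have hp₁ : IsMovePath c c₁' p₁ a e :=
    h.path₁.congr (fun _ _ => rfl) fun x hx => (hold x ((h.mem_iff x).2 (Or.inl hx))).symm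
  have hp₂ : IsMovePath c₁' c' p₂ w a :=
    h.path₂.congr (fun x hx => (hold x ((h.mem_iff x).2 (Or.inr hx))).symm) fun _ _ => rfl
  have hsep : ∀ {l₁ l₂ : List (Fin k)}, (∀ v ∈ l₁, v ∈ vertexSet c c' S) →
      (∀ v ∈ l₂, v ∈ vertexSet c c' T) → l₁.Disjoint l₂ := fun h₁ h₂ v hv₁ hv₂ =>
    disjoint_left.1 hST (h₁ v hv₁) (h₂ v hv₂)
  have hvys : ∀ v ∈ s :: ys.map c₁', v ∈ vertexSet c c' T := hys'.forall_mem_vertices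
    (fun x hx => mem_vertexSet_left ((hTmem x).2 (Or.inl hx))) (mem_vertexSet_left hzT)
  have hvus : ∀ v ∈ c' z :: us.map c', v ∈ vertexSet c c' T := by
    simpa using ⟨mem_vertexSet_right hzT,
      fun x hx => mem_vertexSet_right ((hTmem x).2 (Or.inr (Or.inr hx)))⟩
  have hvp₁ : ∀ v ∈ a :: p₁.map c₁', v ∈ vertexSet c c' S := hp₁.forall_mem_vertices
    (fun x hx => mem_vertexSet_left ((h.mem_iff x).2 (Or.inl hx))) h.end_mem
  have hvp₂ : ∀ v ∈ w :: p₂.map c', v ∈ vertexSet c c' S := by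
    simpa using ⟨h.start_mem, fun x hx => mem_vertexSet_right ((h.mem_iff x).2 (Or.inr hx))⟩
  refine ⟨hys'.join rfl hz hp₁ (hsep hvp₁ hvys).symm, fun x hx => ?_,
    hp₂.join hz rfl hus' (hsep hvp₂ hvus), fun x hx₁ hx₂ => ?_, fun x => ?_,
    vertexSet_mono subset_union_left h.end_mem, vertexSet_mono subset_union_left h.start_mem⟩
  · simp only [List.mem_append, List.mem_cons, not_or] at hx
    simp [c₁', hx.1, hx.2.1, h.fixed₁ x hx.2.2]
  · simp only [List.mem_append, List.mem_cons, not_or] at hx₁ hx₂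
    rcases hx₁ with hx | rfl | hx
    · simp [c₁', hx]
    · exact absurd rfl hx₂.2.1
    · rw [hold x ((h.mem_iff x).2 (Or.inl hx))]
      exact h.settled x hx hx₂.1
  · simp only [mem_union, h.mem_iff, hTmem, List.mem_append, List.mem_cons]
    tauto

end TwoMoveScheme
end Scheme

section Assembly
variable {α : Type*} [DecidableEq α] {k : ℕ} {c c' c₁ : α → Fin k} {S B : Finset α}
  {p₁ p₂ : List α} {a e w f : Fin k}

theorem disjoint_vertexSet_biUnion {𝒜 : Finset (Finset α)}
    (hd : (↑(insert B 𝒜) : Set (Finset α)).PairwiseDisjoint (vertexSet c c')) (hB : B ∉ 𝒜) :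
    Disjoint (vertexSet c c' (𝒜.biUnion id)) (vertexSet c c' B) := by
  rw [vertexSet_biUnion, disjoint_biUnion_left]
  exact fun A hA => hd (by simp [hA]) (by simp) (ne_of_mem_of_not_mem hA hB)

namespace TwoMoveScheme

theorem mergeCycle {𝒜 : Finset (Finset α)} (h : TwoMoveScheme c c' c₁ (𝒜.biUnion id) p₁ p₂ a e w a)
    (hB : IsCycleOn c c' B)
    (hd : (↑(insert B 𝒜) : Set (Finset α)).PairwiseDisjoint (vertexSet c c')) (hB𝒜 : B ∉ 𝒜) :
    ∃ c₁' p₁' p₂' a', TwoMoveScheme c c' c₁' ((insert B 𝒜).biUnion id) p₁' p₂' a' e w a' := by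
  obtain ⟨ys, z, hys, hnd, hB⟩ := hB.exists_isMovePath
  rw [biUnion_insert, id, union_comm]
  exact ⟨_, _, _, _, h.merge (disjoint_vertexSet_biUnion hd hB𝒜) hys (IsMovePath.nil c c' (c' z))
    hnd hB⟩

theorem mergePath {𝒜 : Finset (Finset α)} (h : TwoMoveScheme c c' c₁ (𝒜.biUnion id) p₁ p₂ a e w a)
    (hB : IsPathOn c c' B)
    (hd : (↑(insert B 𝒜) : Set (Finset α)).PairwiseDisjoint (vertexSet c c')) (hB𝒜 : B ∉ 𝒜) :
    ∃ c₁' p₁' p₂' a' f', TwoMoveScheme c c' c₁' ((insert B 𝒜).biUnion id) p₁' p₂' a' e w f' := by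
  obtain ⟨q, s, b, hq, hq₀, hB⟩ := hB.exists_isMovePath
  obtain ⟨z, us, rfl⟩ := List.exists_cons_of_ne_nil hq₀
  obtain ⟨rfl, hus⟩ := hq.of_cons
  rw [biUnion_insert, id, union_comm]
  exact ⟨_, _, _, _, _, h.merge (disjoint_vertexSet_biUnion hd hB𝒜) (IsMovePath.nil c c' (c z))
    hus hq.nodup hB⟩

theorem withinMoves_two (h : TwoMoveScheme c c' c₁ S p₁ p₂ a e w f) :
    WithinMoves 2 c (fun x => if x ∈ S then c' x else c x) := by
  refine (h.path₁.withinMoves_one h.fixed₁).trans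
    ((h.path₂.congr (fun _ _ => rfl) fun x hx => ?_).withinMoves_one fun x hx => ?_)
  · simp [(h.mem_iff x).2 (Or.inr hx)]
  · by_cases hx₁ : x ∈ p₁
    · simp [h.mem_iff, hx₁, h.settled x hx₁ hx]
    · simp [h.mem_iff, hx₁, hx, h.fixed₁ x hx₁]

end TwoMoveScheme

theorem exists_twoMoveScheme {P : Finset α} (hP : IsPathOn c c' P) (𝒞 : Finset (Finset α))
    (hcyc : ∀ B ∈ 𝒞, IsCycleOn c c' B)
    (hd : (↑(insert P 𝒞) : Set (Finset α)).PairwiseDisjoint (vertexSet c c')) (hP𝒞 : P ∉ 𝒞) :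
    ∃ c₁ p₁ p₂ a e w, TwoMoveScheme c c' c₁ ((insert P 𝒞).biUnion id) p₁ p₂ a e w a := by
  induction 𝒞 using Finset.induction_on with
  | empty =>
    obtain ⟨q, w, e, hq, hq₀, rfl⟩ := hP.exists_isMovePath
    exact ⟨_, _, _, _, _, _, by simpa using TwoMoveScheme.of_isMovePath hq hq₀⟩
  | insert B 𝒞 hB ih =>
    have hsub : insert P 𝒞 ⊆ insert P (insert B 𝒞) := insert_subset_insert _ (subset_insert _ _)
    obtain ⟨c₁, p₁, p₂, a, e, w, h⟩ := ih (fun B' hB' => hcyc B' (mem_insert_of_mem hB'))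
      (hd.subset (by exact_mod_cast hsub)) (fun h => hP𝒞 (mem_insert_of_mem h))
    have hB' : B ∉ insert P 𝒞 := by
      simp only [mem_insert, not_or]
      exact ⟨fun h => hP𝒞 (h ▸ mem_insert_self B 𝒞), hB⟩
    rw [insert_comm P B] at hd ⊢
    obtain ⟨c₁', p₁', p₂', a', h'⟩ := h.mergeCycle (hcyc B (mem_insert_self B 𝒞)) hd hB'
    exact ⟨c₁', p₁', p₂', a', e, w, h'⟩

theorem withinMoves_of_isPathOn (R : Finset (Finset α)) (hR : ∀ B ∈ R, IsPathOn c c' B)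
    (hd : (R : Set (Finset α)).PairwiseDisjoint (vertexSet c c')) {c₀ : α → Fin k}
    (hc₀ : ∀ x ∈ R.biUnion id, c₀ x = c x) :
    WithinMoves R.card c₀ (fun x => if x ∈ R.biUnion id then c' x else c₀ x) := by
  induction R using Finset.induction_on with
  | empty => simpa using WithinMoves.refl 0 c₀
  | insert B R hB ih =>
    have hBR := disjoint_vertexSet_biUnion hd hB
    rw [coe_insert] at hd
    have ih := ih (fun B' hB' => hR B' (mem_insert_of_mem hB')) (hd.subset (Set.subset_insert _ _))
      fun x hx => hc₀ x (by rw [biUnion_insert]; exact mem_union_right _ hx)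
    obtain ⟨q, a, b, hq, -, rfl⟩ := (hR B (mem_insert_self B R)).exists_isMovePath
    rw [card_insert_of_notMem hB]
    refine ih.trans (IsMovePath.withinMoves_one (hq.congr (fun x hx => ?_) (fun x hx => ?_))
      fun x hx => ?_)
    · have hxR := notMem_of_disjoint_vertexSet hBR.symm (List.mem_toFinset.2 hx)
      simp [hxR, hc₀ x (by simp [biUnion_insert, hx])]
    · simp [biUnion_insert, hx]
    · simp [biUnion_insert, hx]

theorem transDist_le_of_twoMoveScheme {ℬ 𝒰 : Finset (Finset α)}
    (h : TwoMoveScheme c c' c₁ (𝒰.biUnion id) p₁ p₂ a e w f) (h𝒰 : 𝒰 ⊆ ℬ)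
    (hpath : ∀ B ∈ ℬ \ 𝒰, IsPathOn c c' B)
    (hd : (ℬ : Set (Finset α)).PairwiseDisjoint (vertexSet c c'))
    (hcover : ∀ x, c x ≠ c' x → x ∈ ℬ.biUnion id) :
    transDist c c' ≤ 2 + (ℬ \ 𝒰).card := by
  have hsep : ∀ x ∈ (ℬ \ 𝒰).biUnion id, x ∉ 𝒰.biUnion id := by
    intro x hx hx'
    obtain ⟨B, hB, hxB⟩ := mem_biUnion.1 hx
    obtain ⟨A, hA, hxA⟩ := mem_biUnion.1 hx'
    have hAB : A ≠ B := fun hAB => (mem_sdiff.1 hB).2 (hAB ▸ hA)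
    exact notMem_of_disjoint_vertexSet (hd (h𝒰 hA) (mem_sdiff.1 hB).1 hAB) hxA hxB
  have hmoves := h.withinMoves_two.trans (withinMoves_of_isPathOn (ℬ \ 𝒰) hpath
    (hd.subset (by simp)) fun x hx => by simp [hsep x hx])
  convert hmoves.transDist_le using 2
  funext x
  by_cases hx : x ∈ ℬ.biUnion id
  · obtain ⟨B, hB, hxB⟩ := mem_biUnion.1 hx
    by_cases hB𝒰 : B ∈ 𝒰
    · simp [mem_biUnion.2 ⟨B, hB𝒰, hxB⟩]
    · simp [mem_biUnion.2 ⟨B, mem_sdiff.2 ⟨hB, hB𝒰⟩, hxB⟩]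
  · have h₁ : x ∉ (ℬ \ 𝒰).biUnion id := fun h' =>
      hx (biUnion_subset_biUnion_of_subset_left _ sdiff_subset h')
    have h₂ : x ∉ 𝒰.biUnion id := fun h' => hx (biUnion_subset_biUnion_of_subset_left _ h𝒰 h')
    simp [h₁, h₂, not_not.1 (mt (hcover x) hx)]

end Assembly

/-- If `CDG(c, c')` decomposes into pairwise vertex-disjoint directed cycles and
`t ≥ 1` directed paths (all cycles and paths mutually vertex-disjoint), then
`d(c, c') ≤ max {2, t}`. -/
theorem stmt_11 (c c' : X → Fin k) (CS PS : Finset (Finset X)) (t : ℕ)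
    (ht : 1 ≤ t) (htcard : PS.card = t)
    (hcyc : ∀ B ∈ CS, IsCycleOn c c' B)
    (hpath : ∀ B ∈ PS, IsPathOn c c' B)
    (hcover : (CS ∪ PS).biUnion id = Finset.univ.filter fun x => c x ≠ c' x)
    (hdisj : ∀ B ∈ CS ∪ PS, ∀ B' ∈ CS ∪ PS, B ≠ B' →
      Disjoint (B.image c ∪ B.image c') (B'.image c ∪ B'.image c')) :
    transDist c c' ≤ max 2 t := by
  have hd : (↑(CS ∪ PS) : Set (Finset X)).PairwiseDisjoint (vertexSet c c') :=
    fun B hB B' hB' => hdisj B hB B' hB'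
  have hmoved : ∀ x, c x ≠ c' x → x ∈ (CS ∪ PS).biUnion id := fun x hx => by simp [hcover, hx]
  obtain ⟨P₁, hP₁⟩ : PS.Nonempty := card_pos.1 (by omega)
  -- a block listed both as a cycle and as a path is treated as a path
  have h𝒰₁ : insert P₁ (CS \ PS) ⊆ CS ∪ PS :=
    insert_subset (mem_union_right _ hP₁) (sdiff_subset.trans subset_union_left)
  have hR₁ : (CS ∪ PS) \ insert P₁ (CS \ PS) = PS.erase P₁ := by
    ext; grind
  obtain ⟨c₁, p₁, p₂, a, e, w, h₁⟩ := exists_twoMoveScheme (hpath P₁ hP₁) (CS \ PS)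
    (fun B hB => hcyc B (mem_sdiff.1 hB).1) (hd.subset (by exact_mod_cast h𝒰₁))
    fun h => (mem_sdiff.1 h).2 hP₁
  rcases (PS.erase P₁).eq_empty_or_nonempty with hR | ⟨P₂, hP₂⟩
  · have := transDist_le_of_twoMoveScheme h₁ h𝒰₁
      (hR₁ ▸ fun B hB => hpath B (mem_of_mem_erase hB)) hd hmoved
    rw [hR₁, hR, card_empty] at this
    omega
  · have h𝒰₂ : insert P₂ (insert P₁ (CS \ PS)) ⊆ CS ∪ PS :=
      insert_subset (mem_union_right _ (mem_of_mem_erase hP₂)) h𝒰₁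
    have hR₂ : (CS ∪ PS) \ insert P₂ (insert P₁ (CS \ PS)) = (PS.erase P₁).erase P₂ := by
      ext; grind
    obtain ⟨c₂, p₁', p₂', a', f', h₂⟩ := h₁.mergePath (hpath P₂ (mem_of_mem_erase hP₂))
      (hd.subset (by exact_mod_cast h𝒰₂)) (by grind)
    have := transDist_le_of_twoMoveScheme h₂ h𝒰₂
      (hR₂ ▸ fun B hB => hpath B (mem_of_mem_erase (mem_of_mem_erase hB))) hd hmoved
    rw [hR₂, card_erase_of_mem hP₂, card_erase_of_mem hP₁] at this
    omega
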